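/- Let α > 0, ρ > 0, η, κ, β ∈ ℝ, p ≥ 1, and 0 ≤ a < x. Let f, g be two positive functions on [a,x] such that I f^p(x) < ∞ and I (f+g)^p(x) < ∞, where I denotes the generalized fractional integral ρI^{α,β}_{a+,η,κ}. If there exists a real constant M > 0 such that f(t)/g(t) ≤ M for all t ∈ [a,x], then (I f^p(x))^(1/p) ≤ (M/(M+1)) · (I (f+g)^p(x))^(1/p). -/

import Mathlib

open MeasureTheory

/-- The left-sided generalized (Katugampola) fractional integral
`ρI^{α,β}_{a+,η,κ} f (x)`. -/
noncomputable def katI (α ρ η κ β a x : ℝ) (f : ℝ → ℝ) : ℝ :=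
  (ρ ^ (1 - β) * x ^ κ / Real.Gamma α) *
    ∫ t in a..x, t ^ (ρ * (η + 1) - 1) * (x ^ ρ - t ^ ρ) ^ (α - 1) * f t

/-- Finiteness of the generalized fractional integral, expressed as integrability of the
kernel-weighted integrand. -/
def katIntegrable (α ρ η κ β a x : ℝ) (f : ℝ → ℝ) : Prop :=
  IntervalIntegrable
    (fun t => t ^ (ρ * (η + 1) - 1) * (x ^ ρ - t ^ ρ) ^ (α - 1) * f t)
    volume a x

/-! Since `f ≤ M g`, we have `(M + 1) f ≤ M (f + g)`, i.e. `f ≤ c (f + g)` with `c = M / (M + 1)`,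
pointwise on `[a, x]`. The Katugampola kernel is nonnegative there, so the operator is monotone
and linear in the integrand, giving `I f^p ≤ c^p I (f + g)^p`; taking `p`-th roots gives the bound. -/

open Set

section KatugampolaIntegral

variable {α ρ η κ β a x : ℝ}

lemma katKernel_nonneg (hρ : 0 ≤ ρ) (ha : 0 ≤ a) {t : ℝ} (ht : t ∈ Icc a x) :
    0 ≤ t ^ (ρ * (η + 1) - 1) * (x ^ ρ - t ^ ρ) ^ (α - 1) := by
  have ht0 : 0 ≤ t := ha.trans ht.1
  have hpow : t ^ ρ ≤ x ^ ρ := Real.rpow_le_rpow ht0 ht.2 hρ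
  exact mul_nonneg (Real.rpow_nonneg ht0 _) (Real.rpow_nonneg (sub_nonneg.mpr hpow) _)

lemma katPrefactor_nonneg (hα : 0 < α) (hρ : 0 ≤ ρ) (hx : 0 ≤ x) :
    0 ≤ ρ ^ (1 - β) * x ^ κ / Real.Gamma α := by
  have := Real.Gamma_pos_of_pos hα
  positivity

lemma katI_nonneg (hα : 0 < α) (hρ : 0 ≤ ρ) (ha : 0 ≤ a) (hax : a ≤ x) {f : ℝ → ℝ}
    (hf : ∀ t ∈ Icc a x, 0 ≤ f t) : 0 ≤ katI α ρ η κ β a x f :=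
  mul_nonneg (katPrefactor_nonneg hα hρ (ha.trans hax)) <|
    intervalIntegral.integral_nonneg hax fun t ht =>
      mul_nonneg (katKernel_nonneg hρ ha ht) (hf t ht)

lemma katI_mono (hα : 0 < α) (hρ : 0 ≤ ρ) (ha : 0 ≤ a) (hax : a ≤ x) {f g : ℝ → ℝ}
    (hf : katIntegrable α ρ η κ β a x f) (hg : katIntegrable α ρ η κ β a x g)
    (hfg : ∀ t ∈ Icc a x, f t ≤ g t) :
    katI α ρ η κ β a x f ≤ katI α ρ η κ β a x g :=
  mul_le_mul_of_nonneg_left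
    (intervalIntegral.integral_mono_on hax hf hg fun t ht =>
      mul_le_mul_of_nonneg_left (hfg t ht) (katKernel_nonneg hρ ha ht))
    (katPrefactor_nonneg hα hρ (ha.trans hax))

lemma katI_const_mul (c : ℝ) (f : ℝ → ℝ) :
    katI α ρ η κ β a x (fun t => c * f t) = c * katI α ρ η κ β a x f := by
  simp only [katI, mul_left_comm _ c, intervalIntegral.integral_const_mul]

lemma katIntegrable.const_mul {f : ℝ → ℝ} (hf : katIntegrable α ρ η κ β a x f) (c : ℝ) :
    katIntegrable α ρ η κ β a x (fun t => c * f t) := by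
  simpa only [katIntegrable, mul_left_comm _ c] using IntervalIntegrable.const_mul hf c

end KatugampolaIntegral

lemma le_div_add_one_mul_add {u v M : ℝ} (hM : 0 ≤ M) (hv : 0 < v) (h : u / v ≤ M) :
    u ≤ M / (M + 1) * (u + v) := by
  have huv : u ≤ M * v := (div_le_iff₀ hv).mp h
  rw [div_mul_eq_mul_div, le_div_iff₀ (by linarith)]
  linarith

lemma rpow_one_div_le_mul_rpow_one_div {A B c p : ℝ} (hA : 0 ≤ A) (hB : 0 ≤ B) (hc : 0 ≤ c)
    (hp : 0 < p) (h : A ≤ c ^ p * B) : A ^ (1 / p) ≤ c * B ^ (1 / p) := by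
  rw [one_div, Real.rpow_inv_le_iff_of_pos hA (by positivity) hp,
    Real.mul_rpow hc (by positivity), ← Real.rpow_mul hB, inv_mul_cancel₀ hp.ne', Real.rpow_one]
  exact h

/-- Key lemma bounding `(I f^p)^(1/p)` by `(I (f+g)^p)^(1/p)`. -/
theorem f_bound_katugampola
    (α ρ η κ β p M a x : ℝ) (hα : 0 < α) (hρ : 0 < ρ) (hp : 1 ≤ p)
    (ha : 0 ≤ a) (hax : a < x)
    (f g : ℝ → ℝ)
    (hf_pos : ∀ t ∈ Set.Icc a x, 0 < f t)
    (hg_pos : ∀ t ∈ Set.Icc a x, 0 < g t)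
    (hf_int : katIntegrable α ρ η κ β a x (fun t => f t ^ p))
    (hsum_int : katIntegrable α ρ η κ β a x (fun t => (f t + g t) ^ p))
    (hM : 0 < M)
    (hbound : ∀ t ∈ Set.Icc a x, f t / g t ≤ M) :
    (katI α ρ η κ β a x (fun t => f t ^ p)) ^ (1 / p) ≤
      (M / (M + 1)) * (katI α ρ η κ β a x (fun t => (f t + g t) ^ p)) ^ (1 / p) := by
  have hp0 : 0 < p := by linarith
  have hc : 0 ≤ M / (M + 1) := by positivity
  have hsum : ∀ t ∈ Icc a x, 0 ≤ f t + g t := fun t ht => (add_pos (hf_pos t ht) (hg_pos t ht)).le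
  have hpointwise : ∀ t ∈ Icc a x, f t ^ p ≤ (M / (M + 1)) ^ p * (f t + g t) ^ p := by
    intro t ht
    rw [← Real.mul_rpow hc (hsum t ht)]
    exact Real.rpow_le_rpow (hf_pos t ht).le
      (le_div_add_one_mul_add hM.le (hg_pos t ht) (hbound t ht)) hp0.le
  refine rpow_one_div_le_mul_rpow_one_div
    (katI_nonneg hα hρ.le ha hax.le fun t ht => Real.rpow_nonneg (hf_pos t ht).le p)
    (katI_nonneg hα hρ.le ha hax.le fun t ht => Real.rpow_nonneg (hsum t ht) p) hc hp0 ?_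
  rw [← katI_const_mul]
  exact katI_mono hα hρ.le ha hax.le hf_int (hsum_int.const_mul _) hpointwise
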